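/- Let m be a positive integer, π a permutation of F_{2^m}, and F : F_{2^m} × F_{2^m} → F_{2^m} the Maiorana–McFarland function F(x,y) = x·π(y). Then for every c ∈ F_{2^m} with c ≠ 1, F is not c-differential bent₁, i.e., there exist (u,v) ∈ F_{2^m} × F_{2^m} and b ∈ F_{2^m}\{0} such that W_F((u,v),b)·W_F((u,v),b·c) ≠ cC_F((0,0),b). -/

import Mathlib

/-!
At the origin `(u, v) = (0, 0)` the Walsh transform of `x · π(y)` at `b` is
`q · #{y | b π(y) = 0}`, with `q` the order of the field, by orthogonality of the additive
characters `x ↦ (-1)^Tr(a x)`. The `c`-autocorrelation at `(0, 0)` is the Walsh value at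
`b (1 + c)`, and `1 + c ≠ 0` because `c ≠ 1`. Taking `b = 1`, the left side is
`q · q · #{y | c π(y) = 0}` while the right side is `q`, which is impossible as `q ≥ 2`.
-/

open Finset

noncomputable section

noncomputable instance (p n : ℕ) [Fact p.Prime] : Fintype (GaloisField p n) :=
  Fintype.ofFinite _

/-- The absolute trace `Tr_m : F_{2^m} → F_2`. -/
noncomputable def trAbs (m : ℕ) (x : GaloisField 2 m) : ZMod 2 :=
  Algebra.trace (ZMod 2) (GaloisField 2 m) x

/-- The Walsh transform of `F : F_{2^m} × F_{2^m} → F_{2^m}` at `((u,v), b)`. -/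
noncomputable def WalshMM (m : ℕ)
    (F : GaloisField 2 m × GaloisField 2 m → GaloisField 2 m)
    (w : GaloisField 2 m × GaloisField 2 m) (b : GaloisField 2 m) : ℂ :=
  ∑ x : GaloisField 2 m, ∑ y : GaloisField 2 m,
    (-1 : ℂ) ^ (trAbs m (b * F (x, y)) + trAbs m (w.1 * x) + trAbs m (w.2 * y)).val

/-- The `c`-autocorrelation of `F : F_{2^m} × F_{2^m} → F_{2^m}` at `((u,v), b)`. -/
noncomputable def autoCorrMM (m : ℕ)
    (F : GaloisField 2 m × GaloisField 2 m → GaloisField 2 m) (c : GaloisField 2 m)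
    (w : GaloisField 2 m × GaloisField 2 m) (b : GaloisField 2 m) : ℂ :=
  ∑ x : GaloisField 2 m, ∑ y : GaloisField 2 m,
    (-1 : ℂ) ^ (trAbs m (b * (F (x + w.1, y + w.2) + c * F (x, y)))).val

def negOnePowChar : AddChar (ZMod 2) ℂ where
  toFun t := (-1) ^ t.val
  map_zero_eq_one' := by simp
  map_add_eq_mul' s t := by rw [ZMod.val_add, ← neg_one_pow_eq_pow_mod_two, pow_add]

lemma negOnePowChar_eq_one_iff (t : ZMod 2) : negOnePowChar t = 1 ↔ t = 0 := by
  change (-1 : ℂ) ^ t.val = 1 ↔ t = 0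
  rw [neg_one_pow_eq_one_iff_even (by norm_num), Nat.even_iff, Nat.mod_eq_of_lt (ZMod.val_lt t),
    ZMod.val_eq_zero]

lemma sum_neg_one_pow_trace_mul {L : Type*} [Field L] [Fintype L] [DecidableEq L]
    [Algebra (ZMod 2) L] (a : L) :
    ∑ x : L, (-1 : ℂ) ^ (Algebra.trace (ZMod 2) L (a * x)).val =
      if a = 0 then (Fintype.card L : ℂ) else 0 := by
  let ψ : AddChar L ℂ := negOnePowChar.compAddMonoidHom
    ((Algebra.trace (ZMod 2) L).toAddMonoidHom.comp (AddMonoidHom.mulLeft a))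
  have hψ : ψ = 0 ↔ a = 0 := by
    simp only [AddChar.eq_zero_iff, ψ, AddChar.compAddMonoidHom_apply, negOnePowChar_eq_one_iff]
    refine ⟨fun h => (traceForm_nondegenerate (ZMod 2) L).1 a h, ?_⟩
    rintro rfl x
    simp
  change ∑ x, ψ x = _
  rw [ψ.sum_eq_ite]
  exact if_congr hψ rfl rfl

lemma card_filter_mul_eq_zero {K α : Type*} [MulZeroClass K] [NoZeroDivisors K] [Fintype α]
    [DecidableEq K] {π : α → K} (hπ : Function.Bijective π) {b : K} (hb : b ≠ 0) :
    #{y | b * π y = 0} = 1 := by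
  obtain ⟨y₀, hy₀⟩ := hπ.surjective 0
  rw [card_eq_one]
  refine ⟨y₀, ?_⟩
  ext y
  simp only [mem_filter, mem_univ, true_and, mem_singleton, mul_eq_zero, hb, false_or]
  rw [← hy₀, hπ.injective.eq_iff]

open Classical in
lemma walshMM_maioranaMcFarland_zero (m : ℕ) (π : GaloisField 2 m → GaloisField 2 m)
    (b : GaloisField 2 m) :
    WalshMM m (fun z => z.1 * π z.2) (0, 0) b =
      Fintype.card (GaloisField 2 m) * #{y | b * π y = 0} := by
  have hcomm : ∀ x y, b * (x * π y) = b * π y * x := fun x y => by ring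
  simp only [WalshMM, trAbs, zero_mul, map_zero, add_zero, hcomm]
  rw [sum_comm]
  simp only [sum_neg_one_pow_trace_mul]
  rw [sum_ite, sum_const_zero, add_zero, sum_const, nsmul_eq_mul, mul_comm]

lemma autoCorrMM_zero_eq_walshMM (m : ℕ)
    (F : GaloisField 2 m × GaloisField 2 m → GaloisField 2 m) (c b : GaloisField 2 m) :
    autoCorrMM m F c (0, 0) b = WalshMM m F (0, 0) (b * (1 + c)) := by
  simp only [autoCorrMM, WalshMM, trAbs, zero_mul, map_zero, add_zero]
  refine sum_congr rfl fun x _ => sum_congr rfl fun y _ => ?_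
  ring_nf

theorem statement_11_general (m : ℕ)
    (π : GaloisField 2 m → GaloisField 2 m) (hπ : Function.Bijective π)
    (c : GaloisField 2 m) (hc : c ≠ 1) :
    ∃ u v b : GaloisField 2 m, b ≠ 0 ∧
      WalshMM m (fun z => z.1 * π z.2) (u, v) b *
          WalshMM m (fun z => z.1 * π z.2) (u, v) (b * c) ≠
        autoCorrMM m (fun z => z.1 * π z.2) c (0, 0) b := by
  classical
  have h1c : 1 + c ≠ 0 := fun h => hc (CharTwo.add_eq_zero.1 h).symm
  refine ⟨0, 0, 1, one_ne_zero, ?_⟩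
  simp only [autoCorrMM_zero_eq_walshMM, one_mul]
  simp only [walshMM_maioranaMcFarland_zero]
  rw [card_filter_mul_eq_zero hπ one_ne_zero, card_filter_mul_eq_zero hπ h1c, Nat.cast_one,
    mul_one]
  set q := Fintype.card (GaloisField 2 m)
  have hq : 1 < q := Fintype.one_lt_card
  intro h
  have h' : q * (q * #{y | c * π y = 0}) = q := by exact_mod_cast h
  have hq1 : q = 1 := Nat.eq_one_of_mul_eq_one_right ((Nat.mul_eq_left (by omega)).1 h')
  omega

theorem statement_11 (m : ℕ) (hm : 0 < m)
    (π : GaloisField 2 m → GaloisField 2 m) (hπ : Function.Bijective π)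
    (c : GaloisField 2 m) (hc : c ≠ 1) :
    ∃ u v b : GaloisField 2 m, b ≠ 0 ∧
      WalshMM m (fun z => z.1 * π z.2) (u, v) b *
          WalshMM m (fun z => z.1 * π z.2) (u, v) (b * c) ≠
        autoCorrMM m (fun z => z.1 * π z.2) c (0, 0) b :=
  statement_11_general m π hπ c hc
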